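/- arXiv:2601.14856 — 6 statements merged into one kernel-verified Lean document; each statement's English description precedes it below -/
import Mathlib

section
/- Let K be a field and L a finite extension of K of degree n. Let (x_1,...,x_k) and (y_1,...,y_ℓ) be two K-linearly independent families of elements of L with k + ℓ ≥ n + 1. Then the set {x_i * y_j : 1 ≤ i ≤ k, 1 ≤ j ≤ ℓ} spans L as a K-vector space. -/
theorem span_mul_of_linearIndependent
    (K L : Type*) [Field K] [Field L] [Algebra K L] [FiniteDimensional K L]
    (n k l : ℕ) (hn : Module.finrank K L = n)
    (x : Fin k → L) (y : Fin l → L)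
    (hx : LinearIndependent K x) (hy : LinearIndependent K y)
    (hkl : k + l ≥ n + 1) :
    Submodule.span K {z : L | ∃ i j, z = x i * y j} = ⊤ := by
  by_contra hM
  set M : Submodule K L := Submodule.span K {z : L | ∃ i j, z = x i * y j} with hMdef
  have hlt : M < ⊤ := lt_top_iff_ne_top.mpr hM
  obtain ⟨f, hf0, hfmap⟩ := M.exists_dual_map_eq_bot_of_lt_top hlt inferInstance
  have hfM : ∀ m ∈ M, f m = 0 := by
    intro m hm
    have : f m ∈ M.map f := Submodule.mem_map_of_mem hm
    rwa [hfmap, Submodule.mem_bot] at this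
  -- the map g : L →ₗ Dual, g a b = f (a * b)
  let g : L →ₗ[K] Module.Dual K L := (LinearMap.mul K L).compr₂ f
  have hg : ∀ a b : L, g a b = f (a * b) := fun a b => rfl
  have hginj : Function.Injective g := by
    rw [← LinearMap.ker_eq_bot, LinearMap.ker_eq_bot']
    intro a ha
    by_contra ha0
    apply hf0
    ext c
    have : g a (a⁻¹ * c) = 0 := by rw [ha]; rfl
    rwa [hg, ← mul_assoc, mul_inv_cancel₀ ha0, one_mul] at this
  have hgy : LinearIndependent K (g ∘ y) := hy.map' g (LinearMap.ker_eq_bot.mpr hginj)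
  set U : Submodule K (Module.Dual K L) := Submodule.span K (Set.range (g ∘ y)) with hU
  have hUrank : Module.finrank K U = l := by
    rw [hU, finrank_span_eq_card hgy, Fintype.card_fin]
  -- each x i lies in the dual coannihilator of U
  have hxi : ∀ i, x i ∈ U.dualCoannihilator := by
    intro i
    rw [Submodule.mem_dualCoannihilator]
    intro φ hφ
    have hle : U ≤ LinearMap.ker (Module.Dual.eval K L (x i)) := by
      rw [hU, Submodule.span_le]
      rintro _ ⟨j, rfl⟩
      simp only [SetLike.mem_coe, LinearMap.mem_ker, Module.Dual.eval_apply,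
        Function.comp_apply]
      rw [hg]
      apply hfM
      apply Submodule.subset_span
      exact ⟨i, j, by ring⟩
    have := hle hφ
    simpa using this
  -- restrict x to the coannihilator
  let x' : Fin k → U.dualCoannihilator := fun i => ⟨x i, hxi i⟩
  have hx' : LinearIndependent K x' := by
    apply LinearIndependent.of_comp U.dualCoannihilator.subtype
    exact hx
  have hk : k ≤ Module.finrank K U.dualCoannihilator := by
    simpa [Fintype.card_fin] using hx'.fintype_card_le_finrank
  have hsum := Subspace.finrank_add_finrank_dualCoannihilator_eq U
  rw [hUrank, hn] at hsum
  omega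
end

section
/- Let K be a field, L a finite extension of K of degree n, φ : L → K a nonzero K-linear form, and (x_1,...,x_k), (y_1,...,y_ℓ) two K-linearly independent families in L with k + ℓ ≥ n + 1. Then there exist indices i ∈ [1,k] and j ∈ [1,ℓ] such that φ(x_i y_j) ≠ 0. -/
theorem exists_ne_zero_apply_mul
    (K L : Type*) [Field K] [Field L] [Algebra K L] [FiniteDimensional K L]
    (n k l : ℕ) (hn : Module.finrank K L = n)
    (φ : L →ₗ[K] K) (hφ : φ ≠ 0)
    (x : Fin k → L) (y : Fin l → L)
    (hx : LinearIndependent K x) (hy : LinearIndependent K y)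
    (hkl : k + l ≥ n + 1) :
    ∃ i j, φ (x i * y j) ≠ 0 := by
  by_contra h
  push_neg at h
  set B : LinearMap.BilinForm K L := (LinearMap.mul K L).compr₂ φ with hB
  have hBapply : ∀ a b : L, B a b = φ (a * b) := fun a b => rfl
  have hsymm : B.IsSymm := by
    constructor
    intro a b
    simp [hBapply, mul_comm]
  have hrefl : B.IsRefl := hsymm.isRefl
  have hnd : B.Nondegenerate := by
    refine LinearMap.BilinForm.Nondegenerate.ofSeparatingLeft ?_
    intro a ha
    by_contra ha0
    obtain ⟨c, hc⟩ : ∃ c, φ c ≠ 0 := by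
      by_contra hc
      push_neg at hc
      exact hφ (LinearMap.ext hc)
    apply hc
    have := ha (a⁻¹ * c)
    rwa [hBapply, ← mul_assoc, mul_inv_cancel₀ ha0, one_mul] at this
  have hYX : Submodule.span K (Set.range x) ≤ B.orthogonal (Submodule.span K (Set.range y)) := by
    rw [Submodule.span_le]
    rintro _ ⟨i, rfl⟩
    intro m hm
    induction hm using Submodule.span_induction with
    | mem w hw =>
      obtain ⟨j, rfl⟩ := hw
      have := h i j
      simpa [LinearMap.BilinForm.IsOrtho, hBapply, mul_comm] using this
    | zero => simp [LinearMap.BilinForm.IsOrtho]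
    | add a b _ _ ha hb =>
      show B (a + b) (x i) = 0
      rw [map_add, LinearMap.add_apply, show B a (x i) = 0 from ha,
        show B b (x i) = 0 from hb, add_zero]
    | smul c a _ ha =>
      show B (c • a) (x i) = 0
      rw [map_smul, LinearMap.smul_apply, show B a (x i) = 0 from ha, smul_zero]
  have hk : Module.finrank K (Submodule.span K (Set.range x)) = k := by
    rw [finrank_span_eq_card hx, Fintype.card_fin]
  have hl : Module.finrank K (Submodule.span K (Set.range y)) = l := by
    rw [finrank_span_eq_card hy, Fintype.card_fin]
  have hle := Submodule.finrank_mono hYX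
  rw [hk, LinearMap.BilinForm.finrank_orthogonal hnd, hl, hn] at hle
  have hln : l ≤ n := by
    rw [← hl, ← hn]; exact Submodule.finrank_le _
  omega
end

section
/- Let P ∈ ℂ[X_1,...,X_n] be a nonzero polynomial of total degree at most d. Then there exists a tuple (a_1,...,a_n) ∈ ℕ^n with a_1 + ... + a_n ≤ d such that P(a_1,...,a_n) ≠ 0. -/
open MvPolynomial

lemma combinatorial_nullstellensatz_point_aux :
    ∀ (n d : ℕ) (P : MvPolynomial (Fin n) ℂ), P ≠ 0 → P.totalDegree ≤ d →
    ∃ a : Fin n → ℕ, (∑ i, a i) ≤ d ∧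
      MvPolynomial.eval (fun i => (a i : ℂ)) P ≠ 0 := by
  intro n
  induction n with
  | zero =>
    intro d P hP _
    refine ⟨fun i => 0, by simp, ?_⟩
    rw [P.eq_C_of_isEmpty, MvPolynomial.eval_C]
    intro h
    exact hP (by rw [P.eq_C_of_isEmpty, h, map_zero])
  | succ m ih =>
    intro d P hP hPd
    set q := finSuccEquiv ℂ m P with hq
    have hq0 : q ≠ 0 := by
      simpa [hq] using (map_ne_zero_iff _ (finSuccEquiv ℂ m).injective).mpr hP
    set k := q.natDegree with hk
    have hlead : q.coeff k ≠ 0 := Polynomial.leadingCoeff_ne_zero.mpr hq0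
    have hdle : (q.coeff k).totalDegree + k ≤ d :=
      le_trans (totalDegree_coeff_finSuccEquiv_add_le P k hlead) hPd
    have hkd : k ≤ d := le_trans (Nat.le_add_left _ _) hdle
    obtain ⟨a, ha, haQ⟩ := ih (d - k) (q.coeff k) hlead (by omega)
    set p := q.map (MvPolynomial.eval fun i => (a i : ℂ)) with hp
    have hpk : p.coeff k ≠ 0 := by simpa [hp] using haQ
    have hpdeg : p.natDegree ≤ k := Polynomial.natDegree_map_le
    have : ∃ t ∈ Finset.range (k + 1), p.eval (t : ℂ) ≠ 0 := by
      by_contra h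
      push_neg at h
      have : p = 0 := by
        apply Polynomial.eq_zero_of_natDegree_lt_card_of_eval_eq_zero' p
          ((Finset.range (k + 1)).image (Nat.cast : ℕ → ℂ))
        · intro i hi
          simp only [Finset.mem_image, Finset.mem_range] at hi
          obtain ⟨t, ht, rfl⟩ := hi
          exact h t (Finset.mem_range.mpr ht)
        · rw [Finset.card_image_of_injective _ Nat.cast_injective, Finset.card_range]
          omega
      exact hpk (by simp [this])
    obtain ⟨t, ht, hte⟩ := this
    rw [Finset.mem_range] at ht
    refine ⟨(Fin.cons t a : Fin (m+1) → ℕ), ?_, ?_⟩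
    · rw [Fin.sum_cons]; omega
    · have hfun : (fun i => (((Fin.cons t a : Fin (m+1) → ℕ) i : ℕ) : ℂ)) =
          Fin.cons (t : ℂ) (fun i => (a i : ℂ)) := by
        funext i
        refine Fin.cases ?_ ?_ i <;> simp
      rw [hfun, eval_eq_eval_mv_eval']
      exact hte

theorem combinatorial_nullstellensatz_point
    (n d : ℕ) (hn : 1 ≤ n) (P : MvPolynomial (Fin n) ℂ)
    (hP : P ≠ 0) (hPd : P.totalDegree ≤ d) :
    ∃ a : Fin n → ℕ, (∑ i, a i) ≤ d ∧
      MvPolynomial.eval (fun i => (a i : ℂ)) P ≠ 0 := by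
  exact combinatorial_nullstellensatz_point_aux n d P hP hPd
end

section
/- Let V be a finite-dimensional real normed vector space of dimension n ≥ 1, Γ a full lattice in V, and f : V → ℂ a nonzero function whose restriction to the ℚ-span of Γ is given, in some basis (e_1,...,e_n) of Γ, by a polynomial P ∈ ℂ[X_1,...,X_n] of total degree at most d. Then there exists α ∈ Γ with f(α) ≠ 0 and ‖α‖ ≤ d · λ_n(Γ), where λ_n(Γ) is the n-th Minkowski minimum of Γ. -/
open MvPolynomial


lemma aux_totalDegree_bind₁_le {n : ℕ} (g : Fin n → MvPolynomial (Fin n) ℂ)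
    (hg : ∀ i, (g i).totalDegree ≤ 1) (P : MvPolynomial (Fin n) ℂ) :
    (MvPolynomial.bind₁ g P).totalDegree ≤ P.totalDegree := by
  conv_lhs => rw [P.as_sum]
  rw [map_sum]
  refine (MvPolynomial.totalDegree_finset_sum _ _).trans (Finset.sup_le fun m hm => ?_)
  rw [MvPolynomial.bind₁_monomial]
  refine (MvPolynomial.totalDegree_mul _ _).trans ?_
  rw [MvPolynomial.totalDegree_C, zero_add]
  refine (MvPolynomial.totalDegree_finset_prod _ _).trans ?_
  have step : ∀ i ∈ m.support, (g i ^ m i).totalDegree ≤ m i := fun i _ =>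
    (MvPolynomial.totalDegree_pow _ _).trans
      (by simpa using Nat.mul_le_mul_left (m i) (hg i))
  refine le_trans (Finset.sum_le_sum step) ?_
  exact MvPolynomial.le_totalDegree hm

lemma simplex_lemma : ∀ (n : ℕ) (Q : MvPolynomial (Fin n) ℂ), Q ≠ 0 →
    ∃ c : Fin n → ℕ, (∑ j, c j) ≤ Q.totalDegree ∧
      MvPolynomial.eval (fun j => (c j : ℂ)) Q ≠ 0 := by
  intro n
  induction n with
  | zero =>
    intro Q hQ
    obtain ⟨a, rfl⟩ := MvPolynomial.C_surjective (Fin 0) Q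
    refine ⟨fun _ => 0, by simp, by simpa using fun h => hQ (by rw [h]; simp)⟩
  | succ n ih =>
    intro Q hQ
    set F := MvPolynomial.finSuccEquiv ℂ n Q with hFdef
    have hF0 : F ≠ 0 := by
      simp only [hFdef, ne_eq, map_eq_zero_iff _ (AlgEquiv.injective _)]
      exact hQ
    set k := F.natDegree with hk
    have hQk : F.coeff k ≠ 0 := by
      rw [hk]; exact Polynomial.leadingCoeff_ne_zero.mpr hF0
    obtain ⟨c', hc'sum, hc'⟩ := ih (F.coeff k) hQk
    set g : Polynomial ℂ := F.map (MvPolynomial.eval fun j => (c' j : ℂ)) with hg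
    have hgk : g.coeff k ≠ 0 := by rw [hg, Polynomial.coeff_map]; exact hc'
    have hgdeg : g.natDegree ≤ k := Polynomial.natDegree_map_le
    have hy : ∃ y : Fin (k + 1), g.eval ((y : ℕ) : ℂ) ≠ 0 := by
      by_contra h
      push_neg at h
      have hinj : Function.Injective (fun y : Fin (k + 1) => ((y : ℕ) : ℂ)) := by
        intro a b hab
        simpa [Fin.ext_iff] using Nat.cast_injective (R := ℂ) hab
      have := Polynomial.eq_zero_of_natDegree_lt_card_of_eval_eq_zero g hinj h
        (lt_of_le_of_lt hgdeg (by simp))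
      rw [this] at hgk; simp at hgk
    obtain ⟨y, hy⟩ := hy
    refine ⟨Fin.cons (y : ℕ) c', ?_, ?_⟩
    · rw [Fin.sum_cons]
      calc (y : ℕ) + ∑ j, c' j ≤ k + (F.coeff k).totalDegree :=
            add_le_add (Nat.lt_succ_iff.mp y.isLt) hc'sum
        _ ≤ Q.totalDegree := by
            rw [add_comm]
            exact MvPolynomial.totalDegree_coeff_finSuccEquiv_add_le Q k hQk
    · have hcast : (fun j => ((Fin.cons (y : ℕ) c' : Fin (n + 1) → ℕ) j : ℂ)) =
          Fin.cons (((y : ℕ) : ℂ)) (fun j => (c' j : ℂ)) := by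
        funext j
        refine Fin.cases ?_ (fun i => ?_) j <;> simp
      rw [hcast, MvPolynomial.eval_eq_eval_mv_eval']
      exact hy

lemma eval_bind₁' {n : ℕ} (x : Fin n → ℂ) (g : Fin n → MvPolynomial (Fin n) ℂ)
    (φ : MvPolynomial (Fin n) ℂ) :
    MvPolynomial.eval x (MvPolynomial.bind₁ g φ)
      = MvPolynomial.eval (fun i => MvPolynomial.eval x (g i)) φ := by
  simpa using MvPolynomial.eval₂Hom_bind₁ (RingHom.id ℂ) x g φ

lemma core_lemma
    (V : Type*) [NormedAddCommGroup V] [NormedSpace ℝ V] [FiniteDimensional ℝ V]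
    (n d : ℕ) (hn : Module.finrank ℝ V = n) (hn1 : 1 ≤ n)
    (e : Fin n → V) (he : LinearIndependent ℝ e)
    (f : V → ℂ) (P : MvPolynomial (Fin n) ℂ) (hP : P ≠ 0)
    (hPd : P.totalDegree ≤ d)
    (hf : ∀ a : Fin n → ℚ,
      f (∑ i, (a i : ℝ) • e i) = MvPolynomial.eval (fun i => (a i : ℂ)) P)
    (r : ℝ) (v : Fin n → V) (hvmem : ∀ j, v j ∈ Submodule.span ℤ (Set.range e))
    (hvli : LinearIndependent ℝ v) (hvr : ∀ j, ‖v j‖ ≤ r) :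
    ∃ α ∈ Submodule.span ℤ (Set.range e), f α ≠ 0 ∧ ‖α‖ ≤ (d : ℝ) * r := by
  have hr0 : 0 ≤ r := le_trans (norm_nonneg _) (hvr ⟨0, hn1⟩)
  -- integer coordinates of the `v j`
  haveI : Nonempty (Fin n) := ⟨⟨0, hn1⟩⟩
  have hM : ∀ j, ∃ Mj : Fin n → ℤ, ∑ i, Mj i • e i = v j := fun j =>
    (Submodule.mem_span_range_iff_exists_fun ℤ).mp (hvmem j)
  choose M hMv using hM
  -- basis
  have hcard : Fintype.card (Fin n) = Module.finrank ℝ V := by simp [hn]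
  let b : Module.Basis (Fin n) ℝ V := basisOfLinearIndependentOfCardEqFinrank he hcard
  have hb : ⇑b = e := coe_basisOfLinearIndependentOfCardEqFinrank he hcard
  -- matrices
  set Mr : Matrix (Fin n) (Fin n) ℝ := Matrix.of (fun j i => (M j i : ℝ)) with hMrdef
  have hveq : (fun j => b.equivFun.symm (Mr j)) = v := by
    funext j
    rw [Module.Basis.equivFun_symm_apply, ← hMv j]
    refine Finset.sum_congr rfl fun i _ => ?_
    rw [hb]
    exact Int.cast_smul_eq_zsmul ℝ (M j i) (e i)
  have hrows : LinearIndependent ℝ (fun j => Mr j) := by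
    refine LinearIndependent.of_comp (b.equivFun.symm : (Fin n → ℝ) →ₗ[ℝ] V) ?_
    show LinearIndependent ℝ (fun j => b.equivFun.symm (Mr j))
    rw [hveq]; exact hvli
  have hUnit : IsUnit Mr := Matrix.linearIndependent_rows_iff_isUnit.mp hrows
  set Mz : Matrix (Fin n) (Fin n) ℤ := Matrix.of (fun j i => M j i) with hMzdef
  have hdetz : Mz.det ≠ 0 := by
    have h1 : IsUnit Mr.det := (Matrix.isUnit_iff_isUnit_det Mr).mp hUnit
    have h2 : ((Mz.det : ℤ) : ℝ) = Mr.det := by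
      have := RingHom.map_det (Int.castRingHom ℝ) Mz
      exact this
    intro h
    rw [h] at h2
    rw [← h2] at h1
    simp at h1
  set Mc : Matrix (Fin n) (Fin n) ℂ := Matrix.of (fun j i => (M j i : ℂ)) with hMcdef
  have hUnitC : IsUnit Mc := by
    rw [Matrix.isUnit_iff_isUnit_det, isUnit_iff_ne_zero]
    have h2 : ((Mz.det : ℤ) : ℂ) = Mc.det := by
      have := RingHom.map_det (Int.castRingHom ℂ) Mz
      exact this
    rw [← h2]
    exact_mod_cast hdetz
  -- the substituted polynomial
  set g : Fin n → MvPolynomial (Fin n) ℂ :=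
    fun i => ∑ j, MvPolynomial.C (M j i : ℂ) * MvPolynomial.X j with hgdef
  set Q : MvPolynomial (Fin n) ℂ := MvPolynomial.bind₁ g P with hQdef
  have hgdeg : ∀ i, (g i).totalDegree ≤ 1 := by
    intro i
    refine (MvPolynomial.totalDegree_finset_sum _ _).trans (Finset.sup_le fun j _ => ?_)
    refine (MvPolynomial.totalDegree_mul _ _).trans ?_
    rw [MvPolynomial.totalDegree_C, MvPolynomial.totalDegree_X]
  have hQdeg : Q.totalDegree ≤ d := (aux_totalDegree_bind₁_le g hgdeg P).trans hPd
  have hevalg : ∀ (x : Fin n → ℂ) (i : Fin n),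
      MvPolynomial.eval x (g i) = ∑ j, (M j i : ℂ) * x j := by
    intro x i
    simp [hgdef]
  have hQ0 : Q ≠ 0 := by
    have hz : ∃ z : Fin n → ℂ, MvPolynomial.eval z P ≠ 0 := by
      by_contra h
      push_neg at h
      exact hP (MvPolynomial.funext fun x => by simp [h x])
    obtain ⟨z, hz⟩ := hz
    obtain ⟨w, hw⟩ := (Matrix.vecMul_surjective_iff_isUnit.mpr hUnitC) z
    intro h
    apply hz
    have : MvPolynomial.eval w Q = MvPolynomial.eval z P := by
      rw [hQdef, eval_bind₁']
      have harg : (fun i => MvPolynomial.eval w (g i)) = z := by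
        funext i
        rw [hevalg, ← congrFun hw i]
        simp [Matrix.vecMul, dotProduct, hMcdef, mul_comm]
      rw [harg]
    rw [h] at this
    simp at this
    exact this.symm
  obtain ⟨c, hcsum, hc⟩ := simplex_lemma n Q hQ0
  -- the lattice point
  refine ⟨∑ j, (c j : ℤ) • v j, ?_, ?_, ?_⟩
  · exact Submodule.sum_mem _ fun j _ => Submodule.smul_mem _ _ (hvmem j)
  · -- f value
    set a : Fin n → ℚ := fun i => ((∑ j, (c j : ℤ) * M j i : ℤ) : ℚ) with hadef
    have hai : ∀ i, (a i : ℝ) • e i = ∑ j, ((c j : ℤ) * M j i) • e i := by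
      intro i
      have h1 : ((a i : ℚ) : ℝ) = ((∑ j, (c j : ℤ) * M j i : ℤ) : ℝ) := by
        rw [hadef]; push_cast; ring
      rw [h1, Int.cast_smul_eq_zsmul, ← Finset.sum_smul]
    have hsum : ∑ i, (a i : ℝ) • e i = ∑ j, (c j : ℤ) • v j := by
      simp_rw [hai]
      rw [Finset.sum_comm]
      refine Finset.sum_congr rfl fun j _ => ?_
      rw [← hMv j, Finset.smul_sum]
      exact Finset.sum_congr rfl fun i _ => (mul_smul _ _ _)
    rw [← hsum, hf a]
    have harg : (fun i => ((a i : ℚ) : ℂ)) =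
        (fun i => MvPolynomial.eval (fun j => (c j : ℂ)) (g i)) := by
      funext i
      rw [hevalg, hadef]
      push_cast
      exact Finset.sum_congr rfl fun j _ => (mul_comm _ _)
    rw [harg, ← eval_bind₁']
    exact hc
  · -- norm bound
    refine le_trans (norm_sum_le _ _) ?_
    have h1 : ∀ j, ‖(c j : ℤ) • v j‖ ≤ (c j : ℝ) * r := by
      intro j
      rw [norm_zsmul ℝ]
      have : ‖((c j : ℤ) : ℝ)‖ = (c j : ℝ) := by
        simp [Real.norm_eq_abs]
      rw [this]
      exact mul_le_mul_of_nonneg_left (hvr j) (by positivity)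
    refine le_trans (Finset.sum_le_sum fun j _ => h1 j) ?_
    rw [← Finset.sum_mul]
    refine mul_le_mul_of_nonneg_right ?_ hr0
    calc (∑ j, (c j : ℝ)) = ((∑ j, c j : ℕ) : ℝ) := by push_cast; ring
      _ ≤ (d : ℝ) := by exact_mod_cast hcsum.trans hQdeg

/-- The `i`-th Minkowski minimum of a set `Λ` in a real normed space. -/
noncomputable def minkowskiMin {V : Type*} [NormedAddCommGroup V] [NormedSpace ℝ V]
    (Λ : Set V) (i : ℕ) : ℝ :=
  sInf {r : ℝ | ∃ e : Fin i → V, (∀ j, e j ∈ Λ) ∧ LinearIndependent ℝ e ∧ ∀ j, ‖e j‖ ≤ r}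

theorem exists_small_lattice_point_avoiding
    (V : Type*) [NormedAddCommGroup V] [NormedSpace ℝ V] [FiniteDimensional ℝ V]
    (n d : ℕ) (hn : Module.finrank ℝ V = n) (hn1 : 1 ≤ n)
    (e : Fin n → V) (he : LinearIndependent ℝ e)
    (f : V → ℂ) (P : MvPolynomial (Fin n) ℂ) (hP : P ≠ 0)
    (hPd : P.totalDegree ≤ d)
    (hf : ∀ a : Fin n → ℚ,
      f (∑ i, (a i : ℝ) • e i) = MvPolynomial.eval (fun i => (a i : ℂ)) P) :
    ∃ α ∈ (Submodule.span ℤ (Set.range e) : Submodule ℤ V), f α ≠ 0 ∧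
      ‖α‖ ≤ (d : ℝ) *
        minkowskiMin ((Submodule.span ℤ (Set.range e) : Submodule ℤ V) : Set V) n := by
  classical
  set L : Submodule ℤ V := Submodule.span ℤ (Set.range e) with hLdef
  set S : Set ℝ := {r : ℝ | ∃ w : Fin n → V, (∀ j, w j ∈ (L : Set V)) ∧
    LinearIndependent ℝ w ∧ ∀ j, ‖w j‖ ≤ r} with hSdef
  have hSne : S.Nonempty := by
    refine ⟨∑ i, ‖e i‖, e, fun j => Submodule.subset_span ⟨j, rfl⟩, he, fun j => ?_⟩
    exact Finset.single_le_sum (f := fun i => ‖e i‖) (fun i _ => norm_nonneg _)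
      (Finset.mem_univ j)
  have hSbdd : BddBelow S := by
    refine ⟨0, fun r hr => ?_⟩
    obtain ⟨w, -, -, hw⟩ := hr
    exact le_trans (norm_nonneg _) (hw ⟨0, hn1⟩)
  set lam : ℝ := minkowskiMin (L : Set V) n with hlam
  have hlamS : lam = sInf S := rfl
  have hlam0 : 0 ≤ lam := by
    rw [hlamS]
    exact le_csInf hSne fun r hr => by
      obtain ⟨w, -, -, hw⟩ := hr
      exact le_trans (norm_nonneg _) (hw ⟨0, hn1⟩)
  -- for every ε > 0 we get a good point of norm ≤ d * (lam + ε)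
  have key : ∀ ε : ℝ, 0 < ε → ∃ α ∈ L, f α ≠ 0 ∧ ‖α‖ ≤ (d : ℝ) * lam + (d : ℝ) * ε := by
    intro ε hε
    obtain ⟨r, hrS, hrlt⟩ := Real.lt_sInf_add_pos hSne hε
    obtain ⟨w, hwmem, hwli, hwr⟩ := hrS
    obtain ⟨α, hαL, hα0, hαn⟩ := core_lemma V n d hn hn1 e he f P hP hPd hf r w hwmem hwli hwr
    refine ⟨α, hαL, hα0, hαn.trans ?_⟩
    have : (d : ℝ) * r ≤ (d : ℝ) * (sInf S + ε) :=
      mul_le_mul_of_nonneg_left hrlt.le (by positivity)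
    rw [← hlamS] at this
    linarith
  -- finiteness of small lattice points
  have hcard : Fintype.card (Fin n) = Module.finrank ℝ V := by simp [hn]
  haveI : Nonempty (Fin n) := ⟨⟨0, hn1⟩⟩
  let b : Module.Basis (Fin n) ℝ V := basisOfLinearIndependentOfCardEqFinrank he hcard
  have hb : ⇑b = e := coe_basisOfLinearIndependentOfCardEqFinrank he hcard
  haveI hdT : DiscreteTopology L := by
    rw [hLdef, ← hb]
    infer_instance
  haveI : DiscreteTopology L.toAddSubgroup := hdT
  set C : ℝ := (d : ℝ) * lam + (d : ℝ) with hCdef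
  have hfin : ((Metric.closedBall (0 : V) C : Set V) ∩ L.toAddSubgroup).Finite :=
    Metric.finite_isBounded_inter_isClosed DiscreteTopology.isDiscrete Metric.isBounded_closedBall inferInstance
  set B : Set V := {α : V | α ∈ L ∧ f α ≠ 0 ∧ ‖α‖ ≤ C} with hBdef
  have hBfin : B.Finite := by
    refine hfin.subset fun α hα => ?_
    obtain ⟨h1, h2, h3⟩ := hα
    exact ⟨mem_closedBall_zero_iff.mpr h3, h1⟩
  have hBne : B.Nonempty := by
    obtain ⟨α, hαL, hα0, hαn⟩ := key 1 one_pos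
    exact ⟨α, hαL, hα0, by rw [hCdef]; simpa using hαn⟩
  obtain ⟨α₀, hα₀B, hmin⟩ := Set.exists_min_image B (fun α => ‖α‖) hBfin hBne
  obtain ⟨hα₀L, hα₀0, -⟩ := hα₀B
  refine ⟨α₀, hα₀L, hα₀0, ?_⟩
  refine le_of_forall_pos_le_add fun δ hδ => ?_
  set ε : ℝ := min 1 (δ / ((d : ℝ) + 1)) with hεdef
  have hε : 0 < ε := lt_min one_pos (by positivity)
  obtain ⟨α, hαL, hα0, hαn⟩ := key ε hε
  have hdε1 : (d : ℝ) * ε ≤ (d : ℝ) := by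
    calc (d : ℝ) * ε ≤ (d : ℝ) * 1 :=
          mul_le_mul_of_nonneg_left (min_le_left _ _) (by positivity)
      _ = (d : ℝ) := mul_one _
  have hdεδ : (d : ℝ) * ε ≤ δ := by
    calc (d : ℝ) * ε ≤ (d : ℝ) * (δ / ((d : ℝ) + 1)) :=
          mul_le_mul_of_nonneg_left (min_le_right _ _) (by positivity)
      _ ≤ ((d : ℝ) + 1) * (δ / ((d : ℝ) + 1)) :=
          mul_le_mul_of_nonneg_right (by linarith) (by positivity)
      _ = δ := by field_simp
  have hαB : α ∈ B := ⟨hαL, hα0, by rw [hCdef]; linarith⟩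
  have := hmin α hαB
  linarith
end

section
/- Let K be a number field of degree n with r_1 real and r_2 pairs of complex embeddings, embedded in V = ℝ^{r_1} × ℂ^{r_2} via the embeddings (σ_1,...,σ_{r_1+r_2}). Equip V with a norm satisfying ‖xy‖ ≤ ‖x‖·‖y‖ for the componentwise product. Let I and J be fractional ideals of O_K and k, ℓ ∈ [1,n] with k + ℓ ≥ n + 1. Then λ_n(I·J) ≤ λ_k(I) · λ_ℓ(J), where λ_i denotes the i-th Minkowski minimum of the corresponding lattice in V. -/
open NumberField NumberField.InfinitePlace
open scoped nonZeroDivisors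

/-- The `i`-th successive (Minkowski) minimum of a set `Λ` in a real vector space,
with respect to a norm function `N`. -/
noncomputable def succMin {V : Type*} [AddCommGroup V] [Module ℝ V]
    (N : V → ℝ) (Λ : Set V) (i : ℕ) : ℝ :=
  sInf {r : ℝ | ∃ e : Fin i → V, (∀ j, e j ∈ Λ) ∧ LinearIndependent ℝ e ∧ ∀ j, N (e j) ≤ r}

/-- The image of a fractional ideal in the mixed space `ℝ^{r₁} × ℂ^{r₂}`
under the Minkowski (mixed) embedding. -/
def idealImage (K : Type*) [Field K] (I : FractionalIdeal (𝓞 K)⁰ K) :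
    Set (NumberField.mixedEmbedding.mixedSpace K) :=
  (NumberField.mixedEmbedding K) '' {x : K | x ∈ I}

open NumberField.mixedEmbedding Module

section Helpers

variable {K : Type*} [Field K] [NumberField K]

/-- mixed embedding as a ℚ-linear map. -/
noncomputable def embQ (K : Type*) [Field K] [NumberField K] :
    K →ₗ[ℚ] mixedSpace K := (mixedEmbedding K).toRatAlgHom.toLinearMap

@[simp] lemma embQ_apply (x : K) : embQ K x = mixedEmbedding K x := rfl

/-- Image under the mixed embedding of a ℚ-basis of K is ℝ-linearly independent. -/
lemma linindep_emb_basis {ι : Type*} [Fintype ι] (b : Basis ι ℚ K) :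
    LinearIndependent ℝ (fun i => mixedEmbedding K (b i)) := by
  classical
  set κ := Module.Free.ChooseBasisIndex ℤ (𝓞 K)
  have hcard : Fintype.card κ = Fintype.card ι := by
    rw [← Module.finrank_eq_card_chooseBasisIndex, RingOfIntegers.rank,
      finrank_eq_card_basis b]
  let e : κ ≃ ι := Fintype.equivOfCardEq hcard
  have hmat : (latticeBasis K).toMatrix (fun j => mixedEmbedding K (b (e j))) =
      (algebraMap ℚ ℝ).mapMatrix ((integralBasis K).toMatrix (fun j => b (e j))) := by
    ext i j
    simp only [Basis.toMatrix_apply, RingHom.mapMatrix_apply, Matrix.map_apply,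
      latticeBasis_repr_apply, eq_ratCast, Rat.cast_inj]
  have hunit : IsUnit (((latticeBasis K).toMatrix (fun j => mixedEmbedding K (b (e j)))).det) := by
    rw [hmat, ← RingHom.map_det]
    have : IsUnit (((integralBasis K).toMatrix (fun j => b (e j))).det) := by
      rw [← Basis.det_apply]
      have : (fun j => b (e j)) = ⇑(b.reindex e.symm) := by
        ext j; simp
      rw [this]
      exact (integralBasis K).isUnit_det _
    simp only [isUnit_iff_ne_zero, eq_ratCast, ne_eq, Rat.cast_eq_zero] at this ⊢
    exact this
  have := ((Basis.is_basis_iff_det (latticeBasis K)).mpr (by rwa [Basis.det_apply])).1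
  exact (linearIndependent_equiv e).mp this

/-- Image under the mixed embedding of a ℚ-linearly independent family is
ℝ-linearly independent. -/
lemma linindep_emb {m : ℕ} {x : Fin m → K} (hx : LinearIndependent ℚ x) :
    LinearIndependent ℝ (fun i => mixedEmbedding K (x i)) := by
  classical
  have hs : LinearIndepOn ℚ id (Set.range x) := (linearIndepOn_id_range_iff hx.injective).mpr hx
  let t : Set K := hs.extend (Set.subset_univ _)
  let b : Basis t ℚ K := Basis.extend hs
  haveI : Fintype t := FiniteDimensional.fintypeBasisIndex b
  have hb : LinearIndependent ℝ (fun i : t => mixedEmbedding K (b i)) :=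
    linindep_emb_basis b
  have hcoe : ∀ i : t, b i = (i : K) := fun i => by
    rw [Basis.coe_extend]
  let g : Fin m → t := fun i => ⟨x i, hs.subset_extend _ ⟨i, rfl⟩⟩
  have hg : Function.Injective g := by
    intro i j hij
    exact hx.injective (by simpa [g, Subtype.ext_iff] using hij)
  have : (fun i => mixedEmbedding K (x i)) = (fun i : t => mixedEmbedding K (b i)) ∘ g := by
    funext i
    simp only [Function.comp_apply, hcoe, g]
  rw [this]
  exact hb.comp g hg

/-- Converse: ℝ-linear independence of the embedded family gives
ℚ-linear independence in K. -/
lemma linindep_of_emb {m : ℕ} {x : Fin m → K}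
    (h : LinearIndependent ℝ (fun i => mixedEmbedding K (x i))) :
    LinearIndependent ℚ x := by
  have h' : LinearIndependent ℚ (fun i => mixedEmbedding K (x i)) :=
    h.restrict_scalars (R := ℚ) (by
      intro a b hab
      simpa using hab)
  have : (fun i => mixedEmbedding K (x i)) = (embQ K) ∘ x := rfl
  rw [this] at h'
  exact h'.of_comp (embQ K)

/-- If `x` and `y` are ℚ-linearly independent families in `K` with
`k + l ≥ n + 1`, then the products `x i * y j` span `K` over ℚ. -/
lemma span_products_eq_top {n k l : ℕ} (hn : Module.finrank ℚ K = n)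
    (hkl : n + 1 ≤ k + l) {x : Fin k → K} {y : Fin l → K}
    (hx : LinearIndependent ℚ x) (hy : LinearIndependent ℚ y) :
    Submodule.span ℚ (Set.range fun p : Fin k × Fin l => x p.1 * y p.2) = ⊤ := by
  classical
  by_contra hne
  set U := Submodule.span ℚ (Set.range fun p : Fin k × Fin l => x p.1 * y p.2) with hU
  have hlt : U < ⊤ := lt_top_iff_ne_top.mpr hne
  obtain ⟨φ, hφ0, hφ⟩ := Submodule.exists_dual_map_eq_bot_of_lt_top hlt inferInstance
  have hφU : ∀ z ∈ U, φ z = 0 := by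
    intro z hz
    have : φ z ∈ U.map φ := Submodule.mem_map_of_mem hz
    rwa [hφ, Submodule.mem_bot] at this
  set tr := Algebra.traceForm ℚ K with htrdef
  have htr : tr.Nondegenerate := traceForm_nondegenerate ℚ K
  have hrefl : tr.IsRefl := (Algebra.traceForm_isSymm (R:=ℚ) (S:=K)).isRefl
  set c := (tr.toDual htr).symm φ with hc
  have hcφ : ∀ z, tr c z = φ z := by
    intro z
    have : tr.toDual htr c = φ := LinearEquiv.apply_symm_apply _ _
    rw [← this]; rfl
  have hc0 : c ≠ 0 := by
    intro h
    apply hφ0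
    rw [hc] at h
    have := congrArg (tr.toDual htr) h
    rwa [LinearEquiv.apply_symm_apply, map_zero] at this
  -- the family c * y j is linearly independent
  have hcy : LinearIndependent ℚ (fun j => c * y j) := by
    have : Function.Injective (LinearMap.mulLeft ℚ c) := by
      intro a b hab
      simpa using mul_left_cancel₀ hc0 (by simpa using hab)
    have := hy.map' (LinearMap.mulLeft ℚ c) (LinearMap.ker_eq_bot.mpr this)
    exact this
  set W : Submodule ℚ K := Submodule.span ℚ (Set.range fun j => c * y j) with hW
  have hxW : Submodule.span ℚ (Set.range x) ≤ tr.orthogonal W := by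
    rw [Submodule.span_le]
    rintro _ ⟨i, rfl⟩
    intro w hw
    -- show ∀ w ∈ W, tr w (x i) = 0
    have : W ≤ LinearMap.ker (tr.flip (x i)) := by
      rw [hW, Submodule.span_le]
      rintro _ ⟨j, rfl⟩
      simp only [SetLike.mem_coe, LinearMap.mem_ker, LinearMap.flip_apply]
      show tr (c * y j) (x i) = 0
      have h1 : tr (c * y j) (x i) = tr c (x i * y j) := by
        simp only [htrdef, Algebra.traceForm_apply]
        ring_nf
      rw [h1, hcφ]
      exact hφU _ (Submodule.subset_span ⟨(i, j), rfl⟩)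
    exact this hw
  have hdimW : Module.finrank ℚ W = l := by
    rw [hW, finrank_span_eq_card hcy, Fintype.card_fin]
  have hdimX : Module.finrank ℚ (Submodule.span ℚ (Set.range x)) = k := by
    rw [finrank_span_eq_card hx, Fintype.card_fin]
  have hk_le : k ≤ Module.finrank ℚ (tr.orthogonal W) := by
    rw [← hdimX]
    exact Submodule.finrank_mono hxW
  rw [LinearMap.BilinForm.finrank_orthogonal htr W, hn, hdimW] at hk_le
  have hl_le : l ≤ n := by
    rw [← hdimW, ← hn]
    exact Submodule.finrank_le W
  omega

lemma sset_nonempty (N : mixedSpace K → ℝ) (hN0 : ∀ x, 0 ≤ N x)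
    (I : FractionalIdeal (𝓞 K)⁰ K) (hI : I ≠ 0) (m : ℕ) (hm : m ≤ Module.finrank ℚ K) :
    {r : ℝ | ∃ e : Fin m → mixedSpace K, (∀ j, e j ∈ idealImage K I) ∧
      LinearIndependent ℝ e ∧ ∀ j, N (e j) ≤ r}.Nonempty := by
  classical
  have hIs : (I : Submodule (𝓞 K) K) ≠ ⊥ := by
    rwa [ne_eq, FractionalIdeal.coeToSubmodule_eq_bot]
  obtain ⟨a, haI, ha0⟩ := Submodule.exists_mem_ne_zero_of_ne_bot hIs
  set κ := Module.Free.ChooseBasisIndex ℤ (𝓞 K)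
  have hcard : m ≤ Fintype.card κ := by
    rwa [← Module.finrank_eq_card_chooseBasisIndex, RingOfIntegers.rank]
  let t : Fin m → κ := fun i => (Fintype.equivFin κ).symm (Fin.castLE hcard i)
  have htinj : Function.Injective t := by
    intro i j hij
    have := (Fintype.equivFin κ).symm.injective hij
    exact Fin.castLE_injective hcard this
  let w : Fin m → K := fun i => a * integralBasis K (t i)
  have hwI : ∀ i, w i ∈ I := by
    intro i
    have : w i = (RingOfIntegers.basis K (t i)) • a := by
      rw [Algebra.smul_def, mul_comm]
      simp [w, integralBasis_apply]
    rw [← FractionalIdeal.mem_coe, this]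
    exact Submodule.smul_mem _ _ haI
  have hwli : LinearIndependent ℚ w := by
    have h1 : LinearIndependent ℚ (fun i => integralBasis K (t i)) :=
      (integralBasis K).linearIndependent.comp t htinj
    have hmul : Function.Injective (LinearMap.mulLeft ℚ a) := by
      intro u v huv
      exact mul_left_cancel₀ ha0 (by simpa using huv)
    have := h1.map' (LinearMap.mulLeft ℚ a) (LinearMap.ker_eq_bot.mpr hmul)
    exact this
  refine ⟨∑ j, N (mixedEmbedding K (w j)), fun i => mixedEmbedding K (w i),
    fun j => ⟨w j, hwI j, rfl⟩, linindep_emb hwli, fun j => ?_⟩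
  exact Finset.single_le_sum (f := fun i => N (mixedEmbedding K (w i))) (fun i _ => hN0 _) (Finset.mem_univ j)

lemma le_mul_sInf {T : Set ℝ} (hT : T.Nonempty) {L r : ℝ} (hr : 0 ≤ r)
    (h : ∀ t ∈ T, L ≤ r * t) : L ≤ r * sInf T := by
  rcases hr.eq_or_lt with h0 | hpos
  · obtain ⟨t, ht⟩ := hT
    have := h t ht
    rw [← h0] at this ⊢
    simpa using this
  · have h1 : L / r ≤ sInf T := by
      refine le_csInf hT (fun t ht => ?_)
      rw [div_le_iff₀ hpos]
      rw [mul_comm]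
      exact h t ht
    rw [div_le_iff₀ hpos] at h1
    rw [mul_comm]
    exact h1

end Helpers

theorem succMin_mul_ideal_le
    (K : Type*) [Field K] [NumberField K]
    (n k l : ℕ) (hn : Module.finrank ℚ K = n)
    (hk : 1 ≤ k) (hk' : k ≤ n) (hl : 1 ≤ l) (hl' : l ≤ n) (hkl : k + l ≥ n + 1)
    (N : NumberField.mixedEmbedding.mixedSpace K → ℝ)
    (hN0 : ∀ x, 0 ≤ N x) (hNeq : ∀ x, N x = 0 ↔ x = 0)
    (hNadd : ∀ x y, N (x + y) ≤ N x + N y)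
    (hNsmul : ∀ (c : ℝ) x, N (c • x) = |c| * N x)
    (hNmul : ∀ x y, N (x * y) ≤ N x * N y)
    (I J : FractionalIdeal (𝓞 K)⁰ K) (hI : I ≠ 0) (hJ : J ≠ 0) :
    succMin N (idealImage K (I * J)) n ≤
      succMin N (idealImage K I) k * succMin N (idealImage K J) l := by
  classical
  simp only [succMin]
  set S1 := {r : ℝ | ∃ e : Fin k → mixedSpace K, (∀ j, e j ∈ idealImage K I) ∧
    LinearIndependent ℝ e ∧ ∀ j, N (e j) ≤ r} with hS1
  set S2 := {r : ℝ | ∃ e : Fin l → mixedSpace K, (∀ j, e j ∈ idealImage K J) ∧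
    LinearIndependent ℝ e ∧ ∀ j, N (e j) ≤ r} with hS2
  set S0 := {r : ℝ | ∃ e : Fin n → mixedSpace K, (∀ j, e j ∈ idealImage K (I * J)) ∧
    LinearIndependent ℝ e ∧ ∀ j, N (e j) ≤ r} with hS0
  have hne1 : S1.Nonempty := sset_nonempty N hN0 I hI k (hn ▸ hk')
  have hne2 : S2.Nonempty := sset_nonempty N hN0 J hJ l (hn ▸ hl')
  have lb1 : ∀ t ∈ S1, (0:ℝ) ≤ t := by
    rintro t ⟨e, -, -, hb⟩
    exact le_trans (hN0 _) (hb ⟨0, hk⟩)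
  have lb2 : ∀ t ∈ S2, (0:ℝ) ≤ t := by
    rintro t ⟨e, -, -, hb⟩
    exact le_trans (hN0 _) (hb ⟨0, hl⟩)
  have lb0 : ∀ t ∈ S0, (0:ℝ) ≤ t := by
    rintro t ⟨e, -, -, hb⟩
    exact le_trans (hN0 _) (hb ⟨0, hk.trans hk'⟩)
  -- the key step
  have key : ∀ r ∈ S1, ∀ s ∈ S2, sInf S0 ≤ r * s := by
    rintro r ⟨e, he, hei, her⟩ s ⟨f, hf, hfi, hfs⟩
    have hr0 : (0:ℝ) ≤ r := le_trans (hN0 _) (her ⟨0, hk⟩)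
    have hs0 : (0:ℝ) ≤ s := le_trans (hN0 _) (hfs ⟨0, hl⟩)
    choose x hxI hxe using fun j => (he j)
    choose y hyJ hye using fun j => (hf j)
    have hxli : LinearIndependent ℚ x := by
      refine linindep_of_emb ?_
      have : (fun i => mixedEmbedding K (x i)) = e := funext hxe
      rw [this]; exact hei
    have hyli : LinearIndependent ℚ y := by
      refine linindep_of_emb ?_
      have : (fun i => mixedEmbedding K (y i)) = f := funext hye
      rw [this]; exact hfi
    set g : Fin k × Fin l → K := fun p => x p.1 * y p.2 with hg
    have hgspan : Submodule.span ℚ (Set.range g) = ⊤ :=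
      span_products_eq_top hn (by omega) hxli hyli
    obtain ⟨b, hbsub, hbspan, hbli⟩ := exists_linearIndependent ℚ (Set.range g)
    have hbtop : Submodule.span ℚ b = ⊤ := by rw [hbspan, hgspan]
    let basis : Basis b ℚ K := Basis.mk hbli (by rw [Subtype.range_coe, hbtop])
    haveI : Fintype b := FiniteDimensional.fintypeBasisIndex basis
    have hcard : Fintype.card b = n := by
      rw [← finrank_eq_card_basis basis, hn]
    let eqv : Fin n ≃ b := (Fintype.equivFinOfCardEq hcard).symm
    set z : Fin n → K := fun i => ((eqv i : K)) with hz
    have hzli : LinearIndependent ℚ z := by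
      have h1 : LinearIndependent ℚ (⇑basis ∘ eqv) :=
        basis.linearIndependent.comp eqv eqv.injective
      have : ⇑basis ∘ eqv = z := by
        funext i
        simp [basis, z, Basis.coe_mk]
      rwa [this] at h1
    refine csInf_le ⟨0, lb0⟩ ⟨fun i => mixedEmbedding K (z i), fun i => ?_,
      linindep_emb hzli, fun i => ?_⟩
    · obtain ⟨p, hp⟩ : ∃ p, g p = z i := hbsub (eqv i).2
      refine ⟨z i, ?_, rfl⟩
      rw [← hp]
      exact FractionalIdeal.mul_mem_mul (hxI p.1) (hyJ p.2)
    · obtain ⟨p, hp⟩ : ∃ p, g p = z i := hbsub (eqv i).2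
      have : mixedEmbedding K (z i) = e p.1 * f p.2 := by
        rw [← hp, hg]
        simp only [map_mul]
        rw [hxe, hye]
      show N (mixedEmbedding K (z i)) ≤ r * s
      rw [this]
      exact le_trans (hNmul _ _) (mul_le_mul (her _) (hfs _) (hN0 _) hr0)
  have h2 : (0:ℝ) ≤ sInf S2 := le_csInf hne2 lb2
  have hmain : sInf S0 ≤ sInf S2 * sInf S1 := by
    refine le_mul_sInf hne1 h2 (fun t ht => ?_)
    rw [mul_comm]
    exact le_mul_sInf hne2 (lb1 t ht) (fun u hu => key t ht u hu)
  rw [mul_comm] at hmain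
  exact hmain
end

section
/- Let K be a finite Galois extension of ℚ of degree n with Galois group {σ_1,...,σ_n}, and let β ∈ O_K be such that (σ_1(β),...,σ_n(β)) is a ℚ-basis of K. Then |σ_1(β)|^2 + ... + |σ_n(β)|^2 ≥ |D_K|^{1/n}. -/
open NumberField
open scoped ComplexOrder

theorem normal_basis_lower_bound
    (K : Type*) [Field K] [NumberField K] [IsGalois ℚ K]
    (n : ℕ) (hn : Module.finrank ℚ K = n)
    (σ : Fin n → (K ≃ₐ[ℚ] K)) (hσ : Function.Bijective σ)
    (ψ : K →+* ℂ) (β : 𝓞 K)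
    (h1 : LinearIndependent ℚ (fun i => σ i (β : K)))
    (h2 : Submodule.span ℚ (Set.range fun i => σ i (β : K)) = ⊤) :
    ∑ i, ‖ψ (σ i (β : K))‖ ^ 2 ≥
      |(NumberField.discr K : ℝ)| ^ ((1 : ℝ) / n) := by
  classical
  have hn0 : 0 < n := hn ▸ Module.finrank_pos
  have hnR : (n : ℝ) ≠ 0 := Nat.cast_ne_zero.mpr hn0.ne'
  set v : Fin n → K := fun i => σ i (β : K) with hv
  set S : ℝ := ∑ i, ‖ψ (v i)‖ ^ 2 with hS
  -- the elements are integral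
  have hint : ∀ i, IsIntegral ℤ (v i) := fun i =>
    (RingOfIntegers.isIntegral_coe β).map ((σ i).restrictScalars ℤ)
  set c : Fin n → 𝓞 K := fun i => ⟨v i, hint i⟩ with hc
  have hvc : ∀ i, v i = algebraMap (𝓞 K) K (c i) := fun i => rfl
  -- the discriminant of the family v
  set d : ℚ := Algebra.discr ℚ v with hd
  have hd0 : d ≠ 0 := by
    have hb : ⊤ ≤ Submodule.span ℚ (Set.range v) := h2.ge
    have h := Algebra.discr_not_zero_of_basis ℚ (Module.Basis.mk h1 hb)
    rwa [show ⇑(Module.Basis.mk h1 hb) = v from Module.Basis.coe_mk _ _] at h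
  -- integral basis, base change matrix
  have hcard : Fintype.card (Module.Free.ChooseBasisIndex ℤ (𝓞 K)) = n := by
    rw [← Module.finrank_eq_card_chooseBasisIndex, RingOfIntegers.rank, hn]
  let e0 : Module.Free.ChooseBasisIndex ℤ (𝓞 K) ≃ Fin n := Fintype.equivFinOfCardEq hcard
  let ib : Module.Basis (Fin n) ℚ K := (integralBasis K).reindex e0
  set P : Matrix (Fin n) (Fin n) ℚ := ib.toMatrix v with hP
  have key1 : d = P.det ^ 2 * (discr K : ℚ) := by
    have h := Algebra.discr_of_matrix_vecMul (A := ℚ) (B := K) ⇑ib P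
    rw [hP, Module.Basis.toMatrix_map_vecMul] at h
    rw [hd, h]
    congr 1
    rw [show ⇑ib = ⇑(integralBasis K) ∘ ⇑e0.symm from (integralBasis K).coe_reindex e0,
      Algebra.discr_reindex, coe_discr]
  set Pz : Matrix (Fin n) (Fin n) ℤ :=
    fun k j => (RingOfIntegers.basis K).repr (c j) (e0.symm k) with hPz
  have hPmap : P = Pz.map (Int.cast : ℤ → ℚ) := by
    ext k j
    rw [hP, Module.Basis.toMatrix_apply, hvc j, Matrix.map_apply]
    show ((integralBasis K).reindex e0).repr _ k = _
    rw [Module.Basis.repr_reindex, Finsupp.mapDomain_equiv_apply, integralBasis_repr_apply]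
    rfl
  have hdet : P.det = ((Pz.det : ℤ) : ℚ) := by
    rw [hPmap]
    exact ((Int.castRingHom ℚ).map_det Pz).symm
  have hz0 : Pz.det ≠ 0 := by
    intro h
    apply hd0
    rw [key1, hdet, h]
    simp
  have hsq : (1 : ℚ) ≤ P.det ^ 2 := by
    have h1le : (1 : ℤ) ≤ Pz.det ^ 2 := by
      rw [← sq_abs]
      exact one_le_pow₀ (Int.one_le_abs hz0)
    rw [hdet]
    exact_mod_cast h1le
  have habs : |(discr K : ℚ)| ≤ |d| := by
    calc |(discr K : ℚ)| ≤ P.det ^ 2 * |(discr K : ℚ)| :=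
          le_mul_of_one_le_left (abs_nonneg _) hsq
      _ = |d| := by rw [key1, abs_mul, abs_of_nonneg (sq_nonneg P.det)]
  -- the embeddings
  let ψa : K →ₐ[ℚ] ℂ := RingHom.equivRatAlgHom K ℂ ψ
  have hψa : ∀ x : K, ψa x = ψ x := fun x => rfl
  let f : Fin n → (K →ₐ[ℚ] ℂ) := fun j => ψa.comp (σ j).toAlgHom
  have hfinj : Function.Injective f := by
    intro i j hij
    apply hσ.injective
    ext x
    have h := congrArg (fun g : K →ₐ[ℚ] ℂ => g x) hij
    exact ψ.injective h
  have hcard2 : Fintype.card (Fin n) = Fintype.card (K →ₐ[ℚ] ℂ) := by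
    rw [Fintype.card_fin,
      Fintype.card_congr (RingHom.equivRatAlgHom (R := K) (S := ℂ)).symm,
      Embeddings.card K ℂ, hn]
  let e : Fin n ≃ (K →ₐ[ℚ] ℂ) :=
    Equiv.ofBijective f ((Fintype.bijective_iff_injective_and_card f).mpr ⟨hfinj, hcard2⟩)
  set M : Matrix (Fin n) (Fin n) ℂ := Algebra.embeddingsMatrixReindex ℚ ℂ v e with hM
  have hMij : ∀ i j, M i j = ψ (σ j (v i)) := fun i j => rfl
  have hdisc : ((d : ℝ) : ℂ) = M.det ^ 2 := by
    have h := Algebra.discr_eq_det_embeddingsMatrixReindex_pow_two ℚ ℂ v e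
    rw [← hd, ← hM] at h
    rw [← h]
    push_cast
    rw [eq_ratCast (algebraMap ℚ ℂ) d]
  have habs2 : |(d : ℝ)| = ‖M.det‖ ^ 2 := by
    have := congrArg (‖·‖) hdisc
    rwa [Complex.norm_real, Real.norm_eq_abs, norm_pow] at this
  -- re-summation over the Galois group
  have hre : ∀ τ : K ≃ₐ[ℚ] K, ∑ j, ‖ψ (σ j (τ (β : K)))‖ ^ 2 = S := by
    intro τ
    set F : (K ≃ₐ[ℚ] K) → ℝ := fun g => ‖ψ (g (β : K))‖ ^ 2 with hF
    have step1 : ∑ j, ‖ψ (σ j (τ (β : K)))‖ ^ 2 = ∑ g : K ≃ₐ[ℚ] K, F (g * τ) :=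
      Fintype.sum_bijective σ hσ _ _ (fun j => rfl)
    have step2 : ∑ g : K ≃ₐ[ℚ] K, F (g * τ) = ∑ g : K ≃ₐ[ℚ] K, F g :=
      Fintype.sum_equiv (Equiv.mulRight τ) _ _ (fun g => rfl)
    have step3 : S = ∑ g : K ≃ₐ[ℚ] K, F g :=
      Fintype.sum_bijective σ hσ _ _ (fun j => rfl)
    rw [step1, step2, ← step3]
  -- the Gram matrix
  set G : Matrix (Fin n) (Fin n) ℂ := M * M.conjTranspose with hG
  have hdiag : ∀ i, G i i = (S : ℂ) := by
    intro i
    rw [hG, Matrix.mul_apply]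
    have h : ∀ j, M i j * M.conjTranspose j i
        = ((‖ψ (σ j (v i))‖ ^ 2 : ℝ) : ℂ) := by
      intro j
      rw [Matrix.conjTranspose_apply, hMij i j]
      rw [show star (ψ (σ j (v i))) = (starRingEnd ℂ) (ψ (σ j (v i))) from rfl,
        Complex.mul_conj, Complex.normSq_eq_norm_sq]
    rw [Finset.sum_congr rfl (fun j _ => h j), ← Complex.ofReal_sum]
    exact_mod_cast congrArg Complex.ofReal (hre (σ i))
  have hpsd : G.PosSemidef := Matrix.posSemidef_self_mul_conjTranspose M
  have hH : G.IsHermitian := hpsd.isHermitian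
  -- determinant and trace via eigenvalues
  have hdetG : G.det = ((‖M.det‖ ^ 2 : ℝ) : ℂ) := by
    rw [hG, Matrix.det_mul, Matrix.det_conjTranspose,
      show star M.det = (starRingEnd ℂ) M.det from rfl,
      Complex.mul_conj, Complex.normSq_eq_norm_sq]
  have hprod : ∏ i, hH.eigenvalues i = ‖M.det‖ ^ 2 := by
    have h := hH.det_eq_prod_eigenvalues
    rw [hdetG] at h
    apply RCLike.ofReal_injective (K := ℂ)
    rw [RCLike.ofReal_prod, ← h]
    rfl
  have htr : ∑ i, hH.eigenvalues i = n * S := by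
    apply Complex.ofReal_injective
    rw [Complex.ofReal_sum]
    have htrace : G.trace = ∑ i, (hH.eigenvalues i : ℂ) := by
      conv_lhs => rw [hH.spectral_theorem]
      rw [Unitary.conjStarAlgAut_apply, Matrix.trace_mul_cycle, Unitary.coe_star_mul_self, one_mul, Matrix.trace_diagonal]
      simp [Function.comp]
    have htrace2 : G.trace = ((n * S : ℝ) : ℂ) := by
      rw [Matrix.trace]
      simp only [Matrix.diag_apply, hdiag]
      rw [Finset.sum_const, Finset.card_univ, Fintype.card_fin]
      push_cast
      ring
    rw [← htrace, htrace2]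
  -- AM-GM
  have hev : ∀ i ∈ Finset.univ, (0 : ℝ) ≤ hH.eigenvalues i :=
    fun i _ => hpsd.eigenvalues_nonneg i
  have hgm := Real.geom_mean_le_arith_mean_weighted Finset.univ (fun _ => 1 / (n : ℝ))
    hH.eigenvalues (fun i _ => by positivity)
    (by rw [Finset.sum_const, Finset.card_univ, Fintype.card_fin, nsmul_eq_mul]; field_simp)
    hev
  rw [Real.finset_prod_rpow Finset.univ _ hev, ← Finset.mul_sum, htr] at hgm
  have hgm2 : (∏ i, hH.eigenvalues i) ^ ((1 : ℝ) / n) ≤ S := by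
    calc (∏ i, hH.eigenvalues i) ^ ((1 : ℝ) / n) ≤ 1 / (n : ℝ) * ((n : ℝ) * S) := hgm
      _ = S := by field_simp
  -- conclusion
  have hfinal : |(discr K : ℝ)| ≤ ∏ i, hH.eigenvalues i := by
    rw [hprod, ← habs2]
    have : |((discr K : ℚ) : ℝ)| ≤ |((d : ℚ) : ℝ)| := by
      rw [← Rat.cast_abs, ← Rat.cast_abs]
      exact_mod_cast habs
    simpa using this
  calc |(discr K : ℝ)| ^ ((1 : ℝ) / n)
      ≤ (∏ i, hH.eigenvalues i) ^ ((1 : ℝ) / n) :=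
        Real.rpow_le_rpow (abs_nonneg _) hfinal (by positivity)
    _ ≤ S := hgm2
end
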